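/- arXiv:1804.09354 — 6 statements merged into one kernel-verified Lean document; each statement's English description precedes it below -/
import Mathlib

section
/- Let DMU_o = (x_o,y_o), o ∈ J, be FDH_V-efficient and suppose G-IRS prevails at DMU_o. Then the index set Π := {j ∈ J : α_{jo} > 1} is nonempty. -/
open Set

noncomputable section

/-- The FDH variable-returns-to-scale technology:
`T = {(x,y) : y ≥ 0 and ∃ j, x_j ≤ x and y ≤ y_j}`. -/
def FDH {n m s : ℕ} (x : Fin n → Fin m → ℝ) (y : Fin n → Fin s → ℝ) :
    Set ((Fin m → ℝ) × (Fin s → ℝ)) :=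
  {p | (∀ r, 0 ≤ p.2 r) ∧ ∃ j : Fin n, (∀ i, x j i ≤ p.1 i) ∧ (∀ r, p.2 r ≤ y j r)}

/-- DMU_o is FDH_V-efficient: no (x,y) ∈ T with x ≤ x_o, y ≥ y_o, (x,y) ≠ (x_o,y_o). -/
def FDHEfficient {n m s : ℕ} (x : Fin n → Fin m → ℝ) (y : Fin n → Fin s → ℝ)
    (o : Fin n) : Prop :=
  ¬ ∃ p ∈ FDH x y, (∀ i, p.1 i ≤ x o i) ∧ (∀ r, y o r ≤ p.2 r) ∧ p ≠ (x o, y o)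

/-- `α_{jo} = max_i x_{ij} / x_{io}`. -/
def alphaRatio {n m s : ℕ} (x : Fin n → Fin m → ℝ) (_y : Fin n → Fin s → ℝ)
    (o j : Fin n) : ℝ :=
  ⨆ i : Fin m, x j i / x o i

/-- `β_{jo} = min_r y_{rj} / y_{ro}`. -/
def betaRatio {n m s : ℕ} (_x : Fin n → Fin m → ℝ) (y : Fin n → Fin s → ℝ)
    (o j : Fin n) : ℝ :=
  ⨅ r : Fin s, y j r / y o r

/-- `θ_o(D) = inf {θ : ∃ j ∈ J, δ ∈ D, δ x_j ≤ θ x_o, δ y_j ≥ y_o}`. -/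
def thetaEff {n m s : ℕ} (x : Fin n → Fin m → ℝ) (y : Fin n → Fin s → ℝ)
    (o : Fin n) (D : Set ℝ) : ℝ :=
  sInf {θ : ℝ | ∃ j : Fin n, ∃ δ ∈ D,
    (∀ i, δ * x j i ≤ θ * x o i) ∧ (∀ r, y o r ≤ δ * y j r)}

/-- G-IRS prevails at DMU_o iff `θ_o^{ND} > θ_o^{C} = θ_o^{NI}`. -/
def GIRS {n m s : ℕ} (x : Fin n → Fin m → ℝ) (y : Fin n → Fin s → ℝ)
    (o : Fin n) : Prop :=
  thetaEff x y o (Ici 1) > thetaEff x y o (Ici 0) ∧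
    thetaEff x y o (Ici 0) = thetaEff x y o (Icc 0 1)

/-- G-DRS prevails at DMU_o iff `θ_o^{NI} > θ_o^{C} = θ_o^{ND}`. -/
def GDRS {n m s : ℕ} (x : Fin n → Fin m → ℝ) (y : Fin n → Fin s → ℝ)
    (o : Fin n) : Prop :=
  thetaEff x y o (Icc 0 1) > thetaEff x y o (Ici 0) ∧
    thetaEff x y o (Ici 0) = thetaEff x y o (Ici 1)

/-- G-CRS prevails at DMU_o iff `θ_o^{C} = θ_o^{NI} = θ_o^{ND} = 1`. -/
def GCRS {n m s : ℕ} (x : Fin n → Fin m → ℝ) (y : Fin n → Fin s → ℝ)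
    (o : Fin n) : Prop :=
  thetaEff x y o (Ici 0) = 1 ∧ thetaEff x y o (Icc 0 1) = 1 ∧
    thetaEff x y o (Ici 1) = 1

/-- G-SCRS prevails at DMU_o iff `θ_o^{C} = θ_o^{NI} = θ_o^{ND} < 1`. -/
def GSCRS {n m s : ℕ} (x : Fin n → Fin m → ℝ) (y : Fin n → Fin s → ℝ)
    (o : Fin n) : Prop :=
  thetaEff x y o (Ici 0) = thetaEff x y o (Icc 0 1) ∧
    thetaEff x y o (Icc 0 1) = thetaEff x y o (Ici 1) ∧
    thetaEff x y o (Ici 1) < 1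

/-- Response function `β_o(α) = sup {β : (α x_o, β y_o) ∈ T}`. -/
def respFun {n m s : ℕ} (x : Fin n → Fin m → ℝ) (y : Fin n → Fin s → ℝ)
    (o : Fin n) (α : ℝ) : ℝ :=
  sSup {β : ℝ | ((fun i => α * x o i), (fun r => β * y o r)) ∈ FDH x y}

/-- Maximum incremental ratio `σ_o^+ = sup_{α > 1} (β_o(α) - 1)/(α - 1)`. -/
def sigmaPlus {n m s : ℕ} (x : Fin n → Fin m → ℝ) (y : Fin n → Fin s → ℝ)
    (o : Fin n) : ℝ :=
  sSup {ρ : ℝ | ∃ α : ℝ, 1 < α ∧ ρ = (respFun x y o α - 1) / (α - 1)}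

/-- Minimum decremental ratio `σ_o^- = inf {(β_o(α)-1)/(α-1) : α < 1 feasible}`,
taken in the extended reals (so it is `+∞` when no `α < 1` is feasible). -/
def sigmaMinus {n m s : ℕ} (x : Fin n → Fin m → ℝ) (y : Fin n → Fin s → ℝ)
    (o : Fin n) : EReal :=
  sInf {ρ : EReal | ∃ α : ℝ, α < 1 ∧
    (∃ β : ℝ, ((fun i => α * x o i), (fun r => β * y o r)) ∈ FDH x y) ∧
    ρ = (((respFun x y o α - 1) / (α - 1) : ℝ) : EReal)}

/-- Right-IRS: `(δ x_o, δ y_o) ∈ int T` for some `δ > 1`. -/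
def RightIRS {n m s : ℕ} (x : Fin n → Fin m → ℝ) (y : Fin n → Fin s → ℝ)
    (o : Fin n) : Prop :=
  ∃ δ : ℝ, 1 < δ ∧
    ((fun i => δ * x o i), (fun r => δ * y o r)) ∈ interior (FDH x y)

/-- Right-DRS: `(δ x_o, δ y_o) ∉ T` for every `δ > 1`. -/
def RightDRS {n m s : ℕ} (x : Fin n → Fin m → ℝ) (y : Fin n → Fin s → ℝ)
    (o : Fin n) : Prop :=
  ∀ δ : ℝ, 1 < δ →
    ((fun i => δ * x o i), (fun r => δ * y o r)) ∉ FDH x y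

/-- Right-CRS: neither Right-IRS nor Right-DRS. -/
def RightCRS {n m s : ℕ} (x : Fin n → Fin m → ℝ) (y : Fin n → Fin s → ℝ)
    (o : Fin n) : Prop :=
  ¬ RightIRS x y o ∧ ¬ RightDRS x y o

/-- Left-IRS: `(δ x_o, δ y_o) ∉ T` for every `δ ∈ (0,1)`. -/
def LeftIRS {n m s : ℕ} (x : Fin n → Fin m → ℝ) (y : Fin n → Fin s → ℝ)
    (o : Fin n) : Prop :=
  ∀ δ : ℝ, 0 < δ → δ < 1 →
    ((fun i => δ * x o i), (fun r => δ * y o r)) ∉ FDH x y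

/-- Left-DRS: `(δ x_o, δ y_o) ∈ int T` for some `δ ∈ (0,1)`. -/
def LeftDRS {n m s : ℕ} (x : Fin n → Fin m → ℝ) (y : Fin n → Fin s → ℝ)
    (o : Fin n) : Prop :=
  ∃ δ : ℝ, 0 < δ ∧ δ < 1 ∧
    ((fun i => δ * x o i), (fun r => δ * y o r)) ∈ interior (FDH x y)

/-- Left-CRS: neither Left-IRS nor Left-DRS. -/
def LeftCRS {n m s : ℕ} (x : Fin n → Fin m → ℝ) (y : Fin n → Fin s → ℝ)
    (o : Fin n) : Prop :=
  ¬ LeftIRS x y o ∧ ¬ LeftDRS x y o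

/-! If every `α_{jo} ≤ 1`, then every unit uses no more of each input than `DMU_o`.
Efficiency then forbids any unit from producing strictly more of every output, so a
scaling `δ` with `δ y_j ≥ y_o` must satisfy `δ ≥ 1`. Hence the constraints `δ ≥ 0` and
`δ ≥ 1` define the same programme, `θ_o^{C} = θ_o^{ND}`, contradicting G-IRS. -/

section FDH

variable {n m s : ℕ} (x : Fin n → Fin m → ℝ) (y : Fin n → Fin s → ℝ) (o : Fin n)

lemma le_of_alphaRatio_le_one {j : Fin n} (hxo : ∀ i, 0 < x o i)
    (hα : alphaRatio x y o j ≤ 1) (i : Fin m) : x j i ≤ x o i := by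
  have hratio : x j i / x o i ≤ 1 :=
    (le_ciSup (Set.finite_range fun i => x j i / x o i).bddAbove i).trans hα
  exact (div_le_one (hxo i)).mp hratio

lemma thetaEff_eq_of_subset {D D' : Set ℝ} (hD' : D' ⊆ D)
    (hD : ∀ j δ, δ ∈ D → (∀ r, y o r ≤ δ * y j r) → δ ∈ D') :
    thetaEff x y o D = thetaEff x y o D' := by
  unfold thetaEff
  congr 1
  ext θ
  constructor
  · rintro ⟨j, δ, hδ, hθx, hθy⟩
    exact ⟨j, δ, hD j δ hδ hθy, hθx, hθy⟩
  · rintro ⟨j, δ, hδ, hθx, hθy⟩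
    exact ⟨j, δ, hD' hδ, hθx, hθy⟩

variable {x y o}

lemma FDHEfficient.not_forall_lt (heff : FDHEfficient x y o) (hs : 0 < s)
    {j : Fin n} (hxj : ∀ i, x j i ≤ x o i) (hyj : ∀ r : Fin s, 0 < y j r) :
    ¬ ∀ r, y o r < y j r := by
  intro hlt
  refine heff ⟨(x j, y j), ⟨fun r => (hyj r).le, j, fun _ => le_rfl, fun _ => le_rfl⟩,
    hxj, fun r => (hlt r).le, fun h => ?_⟩
  have hr := congrFun (congrArg Prod.snd h) ⟨0, hs⟩
  exact (hlt ⟨0, hs⟩).ne' hr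

lemma FDHEfficient.one_le_of_le_mul (heff : FDHEfficient x y o) (hs : 0 < s)
    {j : Fin n} (hxj : ∀ i, x j i ≤ x o i) (hyj : ∀ r : Fin s, 0 < y j r) {δ : ℝ}
    (hδ : ∀ r, y o r ≤ δ * y j r) : 1 ≤ δ := by
  by_contra! hδ1
  refine heff.not_forall_lt hs hxj hyj fun r => ?_
  calc y o r ≤ δ * y j r := hδ r
    _ < 1 * y j r := mul_lt_mul_of_pos_right hδ1 (hyj r)
    _ = y j r := one_mul _

end FDH

theorem stmt0_general {n m s : ℕ} (hs : 0 < s)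
    (x : Fin n → Fin m → ℝ) (y : Fin n → Fin s → ℝ)
    (hx : ∀ j i, 0 < x j i) (hy : ∀ j r, 0 < y j r)
    (o : Fin n) (heff : FDHEfficient x y o) (hgirs : GIRS x y o) :
    ∃ j : Fin n, 1 < alphaRatio x y o j := by
  by_contra! hα
  have hxle : ∀ j i, x j i ≤ x o i := fun j =>
    le_of_alphaRatio_le_one x y o (hx o) (hα j)
  have htheta : thetaEff x y o (Ici 0) = thetaEff x y o (Ici 1) :=
    thetaEff_eq_of_subset x y o (Ici_subset_Ici.mpr zero_le_one)
      fun j _ _ hδ => heff.one_le_of_le_mul hs (hxle j) (hy j) hδ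
  exact hgirs.1.ne htheta

/-- if DMU_o is FDH_V-efficient and G-IRS prevails at it, then
`Π = {j ∈ J : α_{jo} > 1}` is nonempty. -/
theorem stmt0 {n m s : ℕ} (hm : 0 < m) (hs : 0 < s)
    (x : Fin n → Fin m → ℝ) (y : Fin n → Fin s → ℝ)
    (hx : ∀ j i, 0 < x j i) (hy : ∀ j r, 0 < y j r)
    (o : Fin n) (heff : FDHEfficient x y o) (hgirs : GIRS x y o) :
    ∃ j : Fin n, 1 < alphaRatio x y o j :=
  stmt0_general hs x y hx hy o heff hgirs
end
end

section
/- Let DMU_o = (x_o,y_o), o ∈ J, be FDH_V-efficient. Then Right-IRS prevails at DMU_o if and only if there exist j ∈ J and δ > 1 such that x_j < δ·x_o and y_j > δ·y_o (strict inequalities componentwise). -/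
/-!
The interior of the FDH technology is the union over `j` of the open boxes
`{(x, y) : x > x_j, 0 < y < y_j}`: a point of the interior can be pushed to less input and
more output (and to less output) without leaving `T`, which makes all inequalities strict.
With `y_o > 0`, the ray point `(δ x_o, δ y_o)` lies in such a box exactly when
`x_j < δ x_o` and `δ y_o < y_j`.
-/

open Set

noncomputable section

theorem exists_pos_add_smul_mem_of_mem_interior {E : Type*} [AddCommGroup E] [Module ℝ E]
    [TopologicalSpace E] [ContinuousAdd E] [ContinuousSMul ℝ E] {S : Set E} {p : E}
    (hp : p ∈ interior S) (v : E) : ∃ t : ℝ, 0 < t ∧ p + t • v ∈ S := by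
  have hline : Filter.Tendsto (fun t : ℝ => p + t • v) (nhds 0) (nhds p) :=
    (by fun_prop : Continuous fun t : ℝ => p + t • v).tendsto' 0 p (by simp)
  exact (hline.eventually (mem_interior_iff_mem_nhds.mp hp)).exists_gt

theorem isOpen_setOf_strictlyDominated {n m s : ℕ} (x : Fin n → Fin m → ℝ)
    (y : Fin n → Fin s → ℝ) (j : Fin n) :
    IsOpen {p : (Fin m → ℝ) × (Fin s → ℝ) |
      (∀ r, 0 < p.2 r) ∧ (∀ i, x j i < p.1 i) ∧ ∀ r, p.2 r < y j r} := by
  simp only [ofPred_and, ofPred_forall]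
  refine ((isOpen_iInter_of_finite fun r => isOpen_lt ?_ ?_).inter
    ((isOpen_iInter_of_finite fun i => isOpen_lt ?_ ?_).inter
      (isOpen_iInter_of_finite fun r => isOpen_lt ?_ ?_))) <;> fun_prop

theorem mem_interior_FDH_iff {n m s : ℕ} (x : Fin n → Fin m → ℝ) (y : Fin n → Fin s → ℝ)
    (p : (Fin m → ℝ) × (Fin s → ℝ)) :
    p ∈ interior (FDH x y) ↔
      (∀ r, 0 < p.2 r) ∧ ∃ j, (∀ i, x j i < p.1 i) ∧ ∀ r, p.2 r < y j r := by
  constructor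
  · intro hp
    obtain ⟨t, ht, ⟨hnonneg, -⟩⟩ := exists_pos_add_smul_mem_of_mem_interior hp (0, fun _ => -1)
    obtain ⟨u, hu, ⟨-, j, hxj, hyj⟩⟩ :=
      exists_pos_add_smul_mem_of_mem_interior hp (fun _ => -1, fun _ => 1)
    refine ⟨fun r => ?_, j, fun i => ?_, fun r => ?_⟩
    · linarith [show 0 ≤ p.2 r + t * -1 from hnonneg r]
    · linarith [show x j i ≤ p.1 i + u * -1 from hxj i]
    · linarith [show p.2 r + u * 1 ≤ y j r from hyj r]
  · rintro ⟨hpos, j, hxj, hyj⟩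
    refine interior_maximal ?_ (isOpen_setOf_strictlyDominated x y j) ⟨hpos, hxj, hyj⟩
    rintro q ⟨hqpos, hqx, hqy⟩
    exact ⟨fun r => (hqpos r).le, j, fun i => (hqx i).le, fun r => (hqy r).le⟩

theorem stmt2_general {n m s : ℕ}
    (x : Fin n → Fin m → ℝ) (y : Fin n → Fin s → ℝ)
    (hy : ∀ j r, 0 < y j r)
    (o : Fin n) :
    RightIRS x y o ↔
      ∃ j : Fin n, ∃ δ : ℝ, 1 < δ ∧
        (∀ i, x j i < δ * x o i) ∧ (∀ r, δ * y o r < y j r) := by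
  constructor
  · rintro ⟨δ, hδ, hint⟩
    obtain ⟨-, j, hxj, hyj⟩ := (mem_interior_FDH_iff x y _).mp hint
    exact ⟨j, δ, hδ, hxj, hyj⟩
  · rintro ⟨j, δ, hδ, hxj, hyj⟩
    exact ⟨δ, hδ, (mem_interior_FDH_iff x y _).mpr
      ⟨fun r => mul_pos (by linarith) (hy o r), j, hxj, hyj⟩⟩

/-- Right-IRS prevails at the FDH_V-efficient DMU_o iff there exist
`j ∈ J` and `δ > 1` with `x_j < δ x_o` and `y_j > δ y_o` componentwise. -/
theorem stmt2 {n m s : ℕ} (hm : 0 < m) (hs : 0 < s)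
    (x : Fin n → Fin m → ℝ) (y : Fin n → Fin s → ℝ)
    (hx : ∀ j i, 0 < x j i) (hy : ∀ j r, 0 < y j r)
    (o : Fin n) (heff : FDHEfficient x y o) :
    RightIRS x y o ↔
      ∃ j : Fin n, ∃ δ : ℝ, 1 < δ ∧
        (∀ i, x j i < δ * x o i) ∧ (∀ r, δ * y o r < y j r) :=
  stmt2_general x y hy o
end
end

section
/- Let DMU_o = (x_o,y_o), o ∈ J, be FDH_V-efficient. Then Right-IRS prevails at DMU_o if and only if there exists j ∈ J such that β_{jo} > 1 and α_{jo} < β_{jo}. -/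
open Set

noncomputable section

/-
A point of the ray through `(x_o, y_o)` is interior to the FDH technology exactly when some
DMU_j strictly dominates it, `x_j < δ x_o` and `δ y_o < y_j`; in terms of the ratios this says
`α_{jo} < δ < β_{jo}`. A scale `δ > 1` in that interval exists iff `max 1 α_{jo} < β_{jo}`.
-/

open Filter Topology

-- `0 < a` is what covers an empty index type, where `⨆ i, f i = 0`.
theorem Real.iSup_lt_of_forall_lt {ι : Type*} [Finite ι] {f : ι → ℝ} {a : ℝ}
    (h : ∀ i, f i < a) (ha : 0 < a) : ⨆ i, f i < a := by
  cases isEmpty_or_nonempty ι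
  · simpa using ha
  · obtain ⟨i, hi⟩ := exists_eq_ciSup_of_finite (f := f)
    exact hi ▸ h i

theorem lt_ciInf_of_finite {ι α : Type*} [Finite ι] [Nonempty ι]
    [ConditionallyCompleteLinearOrder α] {f : ι → α} {a : α} (h : ∀ i, a < f i) :
    a < ⨅ i, f i := by
  obtain ⟨i, hi⟩ := exists_eq_ciInf_of_finite (f := f)
  exact hi ▸ h i

section Ratios

variable {n m s : ℕ} (x : Fin n → Fin m → ℝ) (y : Fin n → Fin s → ℝ) (o j : Fin n)
  {δ : ℝ}

theorem alphaRatio_lt_iff (hxo : ∀ i, 0 < x o i) (hδ : 0 < δ) :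
    alphaRatio x y o j < δ ↔ ∀ i, x j i < δ * x o i := by
  simp_rw [← div_lt_iff₀ (hxo _)]
  refine ⟨fun h i => (le_ciSup (Finite.bddAbove_range _) i).trans_lt h,
    fun h => Real.iSup_lt_of_forall_lt h hδ⟩

theorem lt_betaRatio_iff [NeZero s] (hyo : ∀ r, 0 < y o r) :
    δ < betaRatio x y o j ↔ ∀ r, δ * y o r < y j r := by
  simp_rw [← lt_div_iff₀ (hyo _)]
  exact ⟨fun h r => h.trans_le (ciInf_le (Finite.bddBelow_range _) r), lt_ciInf_of_finite⟩

end Ratios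

theorem FDH.exists_strictly_dominating_of_mem_interior {n m s : ℕ}
    {x : Fin n → Fin m → ℝ} {y : Fin n → Fin s → ℝ} {u : Fin m → ℝ} {v : Fin s → ℝ}
    (h : (u, v) ∈ interior (FDH x y)) :
    ∃ j, (∀ i, x j i < u i) ∧ ∀ r, v r < y j r := by
  let shift : ℝ → (Fin m → ℝ) × (Fin s → ℝ) :=
    fun ε => (fun i => u i - ε, fun r => v r + ε)
  have hshift : Tendsto shift (𝓝 0) (𝓝 (u, v)) := by
    simpa [shift] using (show Continuous shift by fun_prop).tendsto 0
  have hnear : ∀ᶠ ε in 𝓝[>] 0, shift ε ∈ FDH x y :=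
    (hshift.eventually (isOpen_interior.mem_nhds h)).filter_mono nhdsWithin_le_nhds |>.mono
      fun _ hε => interior_subset hε
  obtain ⟨ε, ⟨-, j, hxj, hyj⟩, hε⟩ := (hnear.and self_mem_nhdsWithin).exists
  exact ⟨j, fun i => by linarith [hxj i, hε], fun r => by linarith [hyj r, hε]⟩

theorem FDH.mem_interior_of_strictly_dominated {n m s : ℕ}
    {x : Fin n → Fin m → ℝ} {y : Fin n → Fin s → ℝ} {u : Fin m → ℝ} {v : Fin s → ℝ}
    {j : Fin n}
    (hv : ∀ r, 0 < v r) (hxj : ∀ i, x j i < u i) (hyj : ∀ r, v r < y j r) :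
    (u, v) ∈ interior (FDH x y) := by
  have hnear : ∀ᶠ p in 𝓝 (u, v),
      (∀ i, x j i < p.1 i) ∧ ∀ r, 0 < p.2 r ∧ p.2 r < y j r := by
    refine (eventually_all.2 fun i => ?_).and (eventually_all.2 fun r => ?_)
    · exact ((continuous_apply i).comp continuous_fst).continuousAt.eventually
        (lt_mem_nhds (hxj i))
    · exact ((continuous_apply r).comp continuous_snd).continuousAt (x := (u, v))
        |>.eventually
        ((lt_mem_nhds (hv r)).and (gt_mem_nhds (hyj r)))
  rw [mem_interior_iff_mem_nhds]
  exact hnear.mono fun p ⟨hp₁, hp₂⟩ =>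
    ⟨fun r => (hp₂ r).1.le, j, fun i => (hp₁ i).le, fun r => (hp₂ r).2.le⟩

theorem rightIRS_iff_exists_strictly_dominating {n m s : ℕ}
    (x : Fin n → Fin m → ℝ) (y : Fin n → Fin s → ℝ) (o : Fin n) (hyo : ∀ r, 0 < y o r) :
    RightIRS x y o ↔
      ∃ δ, 1 < δ ∧ ∃ j, (∀ i, x j i < δ * x o i) ∧ ∀ r, δ * y o r < y j r := by
  refine exists_congr fun δ => and_congr_right fun hδ =>
    ⟨fun h => FDH.exists_strictly_dominating_of_mem_interior h, fun ⟨_, hxj, hyj⟩ =>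
      FDH.mem_interior_of_strictly_dominated (fun r => mul_pos (one_pos.trans hδ) (hyo r)) hxj hyj⟩

theorem stmt4_general {n m s : ℕ} (hs : 0 < s)
    (x : Fin n → Fin m → ℝ) (y : Fin n → Fin s → ℝ)
    (hx : ∀ j i, 0 < x j i) (hy : ∀ j r, 0 < y j r)
    (o : Fin n) :
    RightIRS x y o ↔
      ∃ j : Fin n, 1 < betaRatio x y o j ∧ alphaRatio x y o j < betaRatio x y o j := by
  have : NeZero s := ⟨hs.ne'⟩
  rw [rightIRS_iff_exists_strictly_dominating x y o (hy o)]
  constructor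
  · rintro ⟨δ, hδ, j, hxj, hyj⟩
    have hδβ := (lt_betaRatio_iff x y o j (hy o)).2 hyj
    have hαδ := (alphaRatio_lt_iff x y o j (hx o) (one_pos.trans hδ)).2 hxj
    exact ⟨j, hδ.trans hδβ, hαδ.trans hδβ⟩
  · rintro ⟨j, hβ, hαβ⟩
    obtain ⟨δ, hδ, hδβ⟩ := exists_between (max_lt hβ hαβ)
    have hδ₁ : 1 < δ := (le_max_left _ _).trans_lt hδ
    refine ⟨δ, hδ₁, j, ?_, (lt_betaRatio_iff x y o j (hy o)).1 hδβ⟩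
    exact (alphaRatio_lt_iff x y o j (hx o) (one_pos.trans hδ₁)).1
      ((le_max_right _ _).trans_lt hδ)

/-- Right-IRS prevails at the FDH_V-efficient DMU_o iff there is
`j ∈ J` with `β_{jo} > 1` and `α_{jo} < β_{jo}`. -/
theorem stmt4 {n m s : ℕ} (hm : 0 < m) (hs : 0 < s)
    (x : Fin n → Fin m → ℝ) (y : Fin n → Fin s → ℝ)
    (hx : ∀ j i, 0 < x j i) (hy : ∀ j r, 0 < y j r)
    (o : Fin n) (heff : FDHEfficient x y o) :
    RightIRS x y o ↔
      ∃ j : Fin n, 1 < betaRatio x y o j ∧ alphaRatio x y o j < betaRatio x y o j :=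
  stmt4_general hs x y hx hy o
end
end

section
/- Let DMU_o = (x_o,y_o), o ∈ J, be FDH_V-efficient. Then Right-DRS prevails at DMU_o if and only if for every j ∈ J either β_{jo} ≤ 1 or β_{jo} < α_{jo}. -/
/-! The scaled unit `(δ x_o, δ y_o)` is dominated by DMU_j exactly when `α_{jo} ≤ δ ≤ β_{jo}`,
so Right-DRS says that no interval `[α_{jo}, β_{jo}]` reaches past `1`; for `δ = β_{jo}` this is
the stated condition. -/

open Set

noncomputable section

section ScaledUnit

variable {n m s : ℕ} {x : Fin n → Fin m → ℝ} {y : Fin n → Fin s → ℝ} {o : Fin n}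

-- Over `Fin 0` the supremum is `0`, so the bound `0 ≤ δ` covers that case too.
theorem alphaRatio_le_iff (hx : ∀ i, 0 < x o i) (j : Fin n) {δ : ℝ} (hδ : 0 ≤ δ) :
    alphaRatio x y o j ≤ δ ↔ ∀ i, x j i ≤ δ * x o i := by
  rw [← forall_congr' fun i => div_le_iff₀ (hx i)]
  exact ⟨fun h i => (le_ciSup (Set.finite_range _).bddAbove i).trans h,
    fun h => Real.iSup_le h hδ⟩

theorem le_betaRatio_iff [Nonempty (Fin s)] (hy : ∀ r, 0 < y o r) (j : Fin n) {δ : ℝ} :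
    δ ≤ betaRatio x y o j ↔ ∀ r, δ * y o r ≤ y j r := by
  rw [← forall_congr' fun r => le_div_iff₀ (hy r)]
  exact le_ciInf_iff (Set.finite_range _).bddBelow

theorem scaled_mem_FDH_iff [Nonempty (Fin s)] (hx : ∀ i, 0 < x o i) (hy : ∀ r, 0 < y o r)
    {δ : ℝ} (hδ : 0 ≤ δ) :
    ((fun i => δ * x o i), (fun r => δ * y o r)) ∈ FDH x y ↔
      ∃ j, alphaRatio x y o j ≤ δ ∧ δ ≤ betaRatio x y o j := by
  simp only [FDH, Set.mem_ofPred_eq, alphaRatio_le_iff hx _ hδ, le_betaRatio_iff hy]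
  exact and_iff_right fun r => mul_nonneg hδ (hy r).le

end ScaledUnit

theorem exists_between_one_lt_iff {a b : ℝ} :
    (∃ δ, 1 < δ ∧ a ≤ δ ∧ δ ≤ b) ↔ 1 < b ∧ a ≤ b :=
  ⟨fun ⟨_, h1, ha, hb⟩ => ⟨h1.trans_le hb, ha.trans hb⟩, fun ⟨h1, ha⟩ => ⟨b, h1, ha, le_rfl⟩⟩

theorem stmt5_general {n m s : ℕ} (hs : 0 < s)
    (x : Fin n → Fin m → ℝ) (y : Fin n → Fin s → ℝ)
    (hx : ∀ j i, 0 < x j i) (hy : ∀ j r, 0 < y j r)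
    (o : Fin n) :
    RightDRS x y o ↔
      ∀ j : Fin n, betaRatio x y o j ≤ 1 ∨ betaRatio x y o j < alphaRatio x y o j := by
  have : Nonempty (Fin s) := ⟨⟨0, hs⟩⟩
  have hcond : ∀ j, betaRatio x y o j ≤ 1 ∨ betaRatio x y o j < alphaRatio x y o j ↔
      ¬ ∃ δ, 1 < δ ∧ alphaRatio x y o j ≤ δ ∧ δ ≤ betaRatio x y o j := fun j => by
    rw [exists_between_one_lt_iff, not_and_or, not_lt, not_le]
  simp only [hcond, RightDRS]
  refine (forall₂_congr fun δ hδ =>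
    (scaled_mem_FDH_iff (hx o) (hy o) (zero_le_one.trans hδ.le)).not).trans ?_
  simp only [not_exists, not_and]
  exact ⟨fun h j δ hδ => h δ hδ j, fun h δ hδ j => h j δ hδ⟩

/-- Right-DRS prevails at the FDH_V-efficient DMU_o iff for every
`j ∈ J`, `β_{jo} ≤ 1` or `β_{jo} < α_{jo}`. -/
theorem stmt5 {n m s : ℕ} (hm : 0 < m) (hs : 0 < s)
    (x : Fin n → Fin m → ℝ) (y : Fin n → Fin s → ℝ)
    (hx : ∀ j i, 0 < x j i) (hy : ∀ j r, 0 < y j r)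
    (o : Fin n) (heff : FDHEfficient x y o) :
    RightDRS x y o ↔
      ∀ j : Fin n, betaRatio x y o j ≤ 1 ∨ betaRatio x y o j < alphaRatio x y o j :=
  stmt5_general hs x y hx hy o
end
end

section
/- Let DMU_o = (x_o,y_o), o ∈ J, be FDH_V-efficient. Then Right-DRS prevails at DMU_o if and only if σ_o^+ < 1. -/
open Set

noncomputable section

/-!
Along the ray through DMU_o, `(α x_o, β y_o)` lies in the FDH technology exactly when `β ≥ 0` and
some DMU_j has `a_j ≤ α` and `β ≤ b_j` (`a_j = alphaRatio`, `b_j = betaRatio`). Efficiency forces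
`a_j > 1` whenever `b_j > 1`, so all these DMUs lie below the line through `(1, 1)` of slope
`κ = max_j (b_j - 1)/(a_j - 1)` (over `b_j > 1`, or `0`), which gives `β_o(α) ≤ 1 + κ (α - 1)` and
hence `σ_o^+ ≤ κ`. Right-DRS means `b_j < a_j` whenever `b_j > 1`, i.e. every such slope, and so
`κ`, is below `1`. Conversely, `(δ x_o, δ y_o) ∈ T` with `δ > 1` gives `β_o(δ) ≥ δ`, an incremental
ratio of at least `1`.
-/

lemma exists_attained_slope_bound {ι : Type*} [Finite ι] {a b : ι → ℝ}
    (h : ∀ j, 1 < b j → 1 < a j) :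
    ∃ κ : ℝ, 0 ≤ κ ∧ (∀ j, 1 < b j → b j - 1 ≤ κ * (a j - 1)) ∧
      (κ = 0 ∨ ∃ j, 1 < b j ∧ b j - 1 = κ * (a j - 1)) := by
  rcases isEmpty_or_nonempty ι with hι | hι
  · exact ⟨0, le_rfl, fun j => isEmptyElim j, Or.inl rfl⟩
  set c : ι → ℝ := fun j => if 1 < b j then (b j - 1) / (a j - 1) else 0 with hc
  have c_nonneg : ∀ j, 0 ≤ c j := fun j => by
    by_cases hj : 1 < b j
    · simp only [hc, if_pos hj]
      exact div_nonneg (by linarith) (by linarith [h j hj])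
    · simp only [hc, if_neg hj, le_refl]
  have sub_one_eq : ∀ j, 1 < b j → b j - 1 = c j * (a j - 1) := fun j hj => by
    simp only [hc, if_pos hj]
    rw [div_mul_cancel₀ _ (by linarith [h j hj])]
  obtain ⟨j₀, hj₀⟩ := Finite.exists_max c
  refine ⟨c j₀, c_nonneg j₀, fun j hj => ?_, ?_⟩
  · rw [sub_one_eq j hj]
    exact mul_le_mul_of_nonneg_right (hj₀ j) (by linarith [h j hj])
  · by_cases hb : 1 < b j₀
    · exact Or.inr ⟨j₀, hb, sub_one_eq j₀ hb⟩
    · exact Or.inl (if_neg hb)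

section RayFDH

variable {n m s : ℕ} {x : Fin n → Fin m → ℝ} {y : Fin n → Fin s → ℝ} {o j : Fin n} {α β : ℝ}

lemma le_smul_iff_alphaRatio_le (hxo : ∀ i, 0 < x o i) (hα : 0 ≤ α) :
    (∀ i, x j i ≤ α * x o i) ↔ alphaRatio x y o j ≤ α := by
  simp only [← div_le_iff₀ (hxo _)]
  exact ⟨fun h => Real.iSup_le h hα,
    fun h i => (le_ciSup (Finite.bddAbove_range _) i).trans h⟩

lemma smul_le_iff_le_betaRatio [Nonempty (Fin s)] (hyo : ∀ r, 0 < y o r) :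
    (∀ r, β * y o r ≤ y j r) ↔ β ≤ betaRatio x y o j := by
  simp only [← le_div_iff₀ (hyo _)]
  exact (le_ciInf_iff (Finite.bddBelow_range _)).symm

lemma ray_mem_FDH_iff [Nonempty (Fin s)] (hxo : ∀ i, 0 < x o i) (hyo : ∀ r, 0 < y o r)
    (hα : 0 ≤ α) :
    ((fun i => α * x o i), (fun r => β * y o r)) ∈ FDH x y ↔
      0 ≤ β ∧ ∃ j, alphaRatio x y o j ≤ α ∧ β ≤ betaRatio x y o j := by
  simp only [FDH, mem_ofPred_eq, mul_nonneg_iff_of_pos_right (hyo _), forall_const]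
  exact and_congr_right fun _ => exists_congr fun _ =>
    and_congr (le_smul_iff_alphaRatio_le hxo hα) (smul_le_iff_le_betaRatio hyo)

lemma FDHEfficient.one_lt_alphaRatio [Nonempty (Fin s)] (heff : FDHEfficient x y o)
    (hxo : ∀ i, 0 < x o i) (hyo : ∀ r, 0 < y o r) (hb : 1 < betaRatio x y o j) :
    1 < alphaRatio x y o j := by
  by_contra! ha
  have hmem : ((fun i => 1 * x o i), (fun r => betaRatio x y o j * y o r)) ∈ FDH x y :=
    (ray_mem_FDH_iff hxo hyo zero_le_one).2 ⟨by linarith, j, ha, le_rfl⟩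
  refine heff ⟨_, hmem, fun i => (one_mul _).le,
    fun r => le_mul_of_one_le_left (hyo r).le hb.le, fun heq => ?_⟩
  obtain ⟨r⟩ := ‹Nonempty (Fin s)›
  have hr : betaRatio x y o j * y o r = y o r := congrFun (congrArg Prod.snd heq) r
  exact hb.ne' ((mul_eq_right₀ (hyo r).ne').1 hr)

lemma RightDRS.betaRatio_lt_alphaRatio [Nonempty (Fin s)] (hdrs : RightDRS x y o)
    (hxo : ∀ i, 0 < x o i) (hyo : ∀ r, 0 < y o r) (hb : 1 < betaRatio x y o j) :
    betaRatio x y o j < alphaRatio x y o j := by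
  by_contra! ha
  exact hdrs _ hb ((ray_mem_FDH_iff hxo hyo (by linarith)).2 ⟨by linarith, j, ha, le_rfl⟩)

variable [Nonempty (Fin s)] {κ : ℝ} (hxo : ∀ i, 0 < x o i) (hyo : ∀ r, 0 < y o r)
  (hκ0 : 0 ≤ κ)
  (hκ : ∀ j, 1 < betaRatio x y o j → betaRatio x y o j - 1 ≤ κ * (alphaRatio x y o j - 1))
include hxo hyo hκ0 hκ

lemma le_of_ray_mem_FDH (hα : 1 ≤ α)
    (hmem : ((fun i => α * x o i), (fun r => β * y o r)) ∈ FDH x y) :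
    β ≤ 1 + κ * (α - 1) := by
  obtain ⟨-, j, ha, hb⟩ := (ray_mem_FDH_iff hxo hyo (by linarith)).1 hmem
  by_cases hbj : 1 < betaRatio x y o j
  · calc β ≤ betaRatio x y o j := hb
      _ ≤ 1 + κ * (alphaRatio x y o j - 1) := by linarith [hκ j hbj]
      _ ≤ 1 + κ * (α - 1) := by gcongr
  · linarith [mul_nonneg hκ0 (sub_nonneg.2 hα)]

lemma le_respFun (hα : 1 ≤ α)
    (hmem : ((fun i => α * x o i), (fun r => β * y o r)) ∈ FDH x y) :
    β ≤ respFun x y o α :=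
  le_csSup ⟨_, fun _ => le_of_ray_mem_FDH hxo hyo hκ0 hκ hα⟩ hmem

lemma incrementalRatio_le (hα : 1 < α) :
    (respFun x y o α - 1) / (α - 1) ≤ κ := by
  have hresp : respFun x y o α ≤ 1 + κ * (α - 1) :=
    Real.sSup_le (fun _ => le_of_ray_mem_FDH hxo hyo hκ0 hκ hα.le)
      (by linarith [mul_nonneg hκ0 (sub_nonneg.2 hα.le)])
  rw [div_le_iff₀ (sub_pos.2 hα)]
  linarith

lemma sigmaPlus_le : sigmaPlus x y o ≤ κ :=
  Real.sSup_le (by rintro _ ⟨α, hα, rfl⟩; exact incrementalRatio_le hxo hyo hκ0 hκ hα) hκ0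

lemma incrementalRatio_le_sigmaPlus (hα : 1 < α) :
    (respFun x y o α - 1) / (α - 1) ≤ sigmaPlus x y o :=
  le_csSup ⟨κ, by rintro _ ⟨α, hα, rfl⟩; exact incrementalRatio_le hxo hyo hκ0 hκ hα⟩
    ⟨α, hα, rfl⟩

end RayFDH

theorem stmt11_general {n m s : ℕ} (hs : 0 < s)
    (x : Fin n → Fin m → ℝ) (y : Fin n → Fin s → ℝ)
    (hx : ∀ j i, 0 < x j i) (hy : ∀ j r, 0 < y j r)
    (o : Fin n) (heff : FDHEfficient x y o) :
    RightDRS x y o ↔ sigmaPlus x y o < 1 := by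
  have : Nonempty (Fin s) := ⟨⟨0, hs⟩⟩
  obtain ⟨κ, hκ0, hκ, hκ_attained⟩ :=
    exists_attained_slope_bound fun j => heff.one_lt_alphaRatio (hx o) (hy o) (j := j)
  constructor
  · intro hdrs
    have hκ1 : κ < 1 := by
      obtain rfl | ⟨j, hb, hj⟩ := hκ_attained
      · exact zero_lt_one
      have hba := hdrs.betaRatio_lt_alphaRatio (hx o) (hy o) hb
      nlinarith
    exact (sigmaPlus_le (hx o) (hy o) hκ0 hκ).trans_lt hκ1
  · intro hσ δ hδ hmem
    have hresp := le_respFun (hx o) (hy o) hκ0 hκ hδ.le hmem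
    have hratio : 1 ≤ (respFun x y o δ - 1) / (δ - 1) := by
      rw [le_div_iff₀ (sub_pos.2 hδ)]
      linarith
    linarith [incrementalRatio_le_sigmaPlus (hx o) (hy o) hκ0 hκ hδ]

/-- Right-DRS at the FDH_V-efficient DMU_o iff `σ_o^+ < 1`. -/
theorem stmt11 {n m s : ℕ} (hm : 0 < m) (hs : 0 < s)
    (x : Fin n → Fin m → ℝ) (y : Fin n → Fin s → ℝ)
    (hx : ∀ j i, 0 < x j i) (hy : ∀ j r, 0 < y j r)
    (o : Fin n) (heff : FDHEfficient x y o) :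
    RightDRS x y o ↔ sigmaPlus x y o < 1 :=
  stmt11_general hs x y hx hy o heff
end
end

section
/- Let DMU_o = (x_o,y_o), o ∈ J, be FDH_V-efficient. Then Left-DRS prevails at DMU_o if and only if σ_o^- < 1. -/
/-! If `(δ x_o, δ y_o)` is interior to `T` for some `δ < 1`, the output can be pushed slightly
above `δ y_o`, so `β_o(δ) > δ`, i.e. the decremental ratio at `δ` is below `1`. Conversely, a
feasible `α < 1` with `β_o(α) > α` is dominated by some `DMU_j` at a level `β > α`; for any
`δ ∈ (α, min β 1)` the point `(δ x_o, δ y_o)` then strictly dominates `(x_j, y_j)` in inputs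
and is strictly dominated in outputs, so a whole box around it lies in `T`. -/

open Set

noncomputable section

open Filter Topology

namespace FDH

variable {n m s : ℕ} (x : Fin n → Fin m → ℝ) (y : Fin n → Fin s → ℝ)

theorem mem_interior_of_strict_dominance {u : Fin m → ℝ} {v : Fin s → ℝ} (j : Fin n)
    (hu : ∀ i, x j i < u i) (hv_pos : ∀ r, 0 < v r) (hv : ∀ r, v r < y j r) :
    (u, v) ∈ interior (FDH x y) := by
  let U : Set ((Fin m → ℝ) × (Fin s → ℝ)) :=
    (⋂ i, {p | x j i < p.1 i}) ∩ ⋂ r, {p | p.2 r ∈ Ioo 0 (y j r)}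
  have hU_open : IsOpen U :=
    (isOpen_iInter_of_finite fun i =>
        isOpen_Ioi.preimage ((continuous_apply i).comp continuous_fst)).inter
      (isOpen_iInter_of_finite fun r =>
        isOpen_Ioo.preimage ((continuous_apply r).comp continuous_snd))
  have hU_sub : U ⊆ FDH x y := by
    rintro p ⟨hp₁, hp₂⟩
    simp only [mem_iInter, mem_ofPred_eq, mem_Ioo] at hp₁ hp₂
    exact ⟨fun r => (hp₂ r).1.le, j, fun i => (hp₁ i).le, fun r => (hp₂ r).2.le⟩
  refine interior_maximal hU_sub hU_open ⟨?_, ?_⟩ <;>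
    simp only [mem_iInter, mem_ofPred_eq, mem_Ioo]
  exacts [hu, fun r => ⟨hv_pos r, hv r⟩]

variable (o : Fin n)

theorem bddAbove_respFun_set (hs : 0 < s) (hy : ∀ j r, 0 < y j r) (α : ℝ) :
    BddAbove {β : ℝ | ((fun i => α * x o i), (fun r => β * y o r)) ∈ FDH x y} := by
  let r₀ : Fin s := ⟨0, hs⟩
  refine ⟨Finset.univ.sup' ⟨o, Finset.mem_univ o⟩ fun j => y j r₀ / y o r₀, ?_⟩
  rintro β ⟨-, j, -, hj⟩
  exact ((le_div_iff₀ (hy o r₀)).mpr (hj r₀)).trans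
    (Finset.le_sup' (fun j => y j r₀ / y o r₀) (Finset.mem_univ j))

theorem sigmaMinus_lt_one_iff :
    sigmaMinus x y o < 1 ↔ ∃ α < 1,
      (∃ β : ℝ, ((fun i => α * x o i), (fun r => β * y o r)) ∈ FDH x y) ∧
        α < respFun x y o α := by
  have key : ∀ α < (1 : ℝ),
      (((respFun x y o α - 1) / (α - 1) : ℝ) : EReal) < 1 ↔ α < respFun x y o α := by
    intro α hα
    rw [← EReal.coe_one, EReal.coe_lt_coe_iff, div_lt_iff_of_neg (sub_neg.mpr hα)]
    constructor <;> intro h <;> linarith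
  constructor
  · intro h
    obtain ⟨-, ⟨α, hα, hfeas, rfl⟩, hlt⟩ := sInf_lt_iff.mp h
    exact ⟨α, hα, hfeas, (key α hα).mp hlt⟩
  · rintro ⟨α, hα, hfeas, hresp⟩
    exact sInf_lt_iff.mpr ⟨_, ⟨α, hα, hfeas, rfl⟩, (key α hα).mpr hresp⟩

theorem exists_lt_of_mem_interior {δ : ℝ}
    (h : ((fun i => δ * x o i), (fun r => δ * y o r)) ∈ interior (FDH x y)) :
    ∃ β > δ, ((fun i => δ * x o i), (fun r => β * y o r)) ∈ FDH x y := by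
  have hcont : Continuous fun β : ℝ =>
      (((fun i => δ * x o i) : Fin m → ℝ), fun r => β * y o r) :=
    continuous_const.prodMk (continuous_pi fun r => continuous_id.mul continuous_const)
  have hnhds : ∀ᶠ β in 𝓝 δ,
      ((fun i => δ * x o i), (fun r => β * y o r)) ∈ interior (FDH x y) :=
    (isOpen_interior.preimage hcont).mem_nhds h
  obtain ⟨β, hβ, hβδ⟩ := ((eventually_nhdsWithin_of_eventually_nhds hnhds).and
    (self_mem_nhdsWithin : ∀ᶠ β in 𝓝[>] δ, δ < β)).exists
  exact ⟨β, hβδ, interior_subset hβ⟩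

end FDH

theorem stmt14_general {n m s : ℕ} (hm : 0 < m) (hs : 0 < s)
    (x : Fin n → Fin m → ℝ) (y : Fin n → Fin s → ℝ)
    (hx : ∀ j i, 0 < x j i) (hy : ∀ j r, 0 < y j r)
    (o : Fin n) :
    LeftDRS x y o ↔ sigmaMinus x y o < (1 : EReal) := by
  rw [FDH.sigmaMinus_lt_one_iff]
  constructor
  · rintro ⟨δ, -, hδ1, hint⟩
    obtain ⟨β, hβδ, hβ⟩ := FDH.exists_lt_of_mem_interior x y o hint
    have hβ_le : β ≤ respFun x y o δ := le_csSup (FDH.bddAbove_respFun_set x y o hs hy δ) hβ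
    exact ⟨δ, hδ1, ⟨β, hβ⟩, hβδ.trans_le hβ_le⟩
  · rintro ⟨α, hα1, hfeas, hresp⟩
    obtain ⟨β, ⟨-, j, hjx, hjy⟩, hαβ⟩ := exists_lt_of_lt_csSup hfeas hresp
    have hα0 : 0 < α := by
      let i₀ : Fin m := ⟨0, hm⟩
      exact pos_of_mul_pos_left ((hx j i₀).trans_le (hjx i₀)) (hx o i₀).le
    obtain ⟨δ, hαδ, hδ⟩ := exists_between (lt_min hαβ hα1)
    refine ⟨δ, hα0.trans hαδ, hδ.trans_le (min_le_right _ _), ?_⟩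
    have hδβ : δ < β := hδ.trans_le (min_le_left _ _)
    exact FDH.mem_interior_of_strict_dominance x y j
      (fun i => (hjx i).trans_lt (mul_lt_mul_of_pos_right hαδ (hx o i)))
      (fun r => mul_pos (hα0.trans hαδ) (hy o r))
      (fun r => (mul_lt_mul_of_pos_right hδβ (hy o r)).trans_le (hjy r))

/-- Left-DRS at the FDH_V-efficient DMU_o iff `σ_o^- < 1`. -/
theorem stmt14 {n m s : ℕ} (hm : 0 < m) (hs : 0 < s)
    (x : Fin n → Fin m → ℝ) (y : Fin n → Fin s → ℝ)
    (hx : ∀ j i, 0 < x j i) (hy : ∀ j r, 0 < y j r)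
    (o : Fin n) (heff : FDHEfficient x y o) :
    LeftDRS x y o ↔ sigmaMinus x y o < (1 : EReal) :=
  stmt14_general hm hs x y hx hy o
end
end
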